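/- Let k be a natural number with 0 < k ≤ r(E). The polytope P^{(k)}(E) has dimension |E| − 1 (i.e., its affine hull has dimension |E| − 1) if and only if E is inseparable or k < r(E). -/

import Mathlib

open Finset

/-- A (loopless) matroid on a finite ground set, given by its independent sets. -/
structure FinMatroid (α : Type*) [Fintype α] [DecidableEq α] where
  Indep : Finset α → Prop
  empty_indep : Indep ∅
  subset_indep : ∀ ⦃I J : Finset α⦄, Indep J → I ⊆ J → Indep I
  exchange : ∀ ⦃I J : Finset α⦄, Indep I → Indep J → I.card < J.card →
    ∃ e ∈ J \ I, Indep (insert e I)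
  loopless : ∀ e : α, Indep {e}

variable {α : Type*} [Fintype α] [DecidableEq α]

open Classical in
/-- The rank of a set: the maximum cardinality of an independent subset. -/
noncomputable def FinMatroid.r (M : FinMatroid α) (F : Finset α) : ℕ :=
  (F.powerset.filter M.Indep).sup Finset.card

/-- incidence vector -/
noncomputable def incVec (I : Finset α) : α → ℝ := fun e => if e ∈ I then 1 else 0

/-- x(S) = ∑_{e ∈ S} x_e -/
noncomputable def fsum (x : α → ℝ) (S : Finset α) : ℝ := ∑ e ∈ S, x e

/-- closed set -/
def FinMatroid.ClosedSet (M : FinMatroid α) (F : Finset α) : Prop :=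
  ∀ e ∉ F, M.r F < M.r (insert e F)

/-- F is separable -/
def FinMatroid.Separable (M : FinMatroid α) (F : Finset α) : Prop :=
  ∃ F₁ F₂ : Finset α, F₁ ≠ ∅ ∧ F₂ ≠ ∅ ∧ Disjoint F₁ F₂ ∧ F₁ ∪ F₂ = F ∧
    M.r F₁ + M.r F₂ ≤ M.r F

def FinMatroid.Inseparable (M : FinMatroid α) (F : Finset α) : Prop :=
  ¬ M.Separable F

/-- the k-rank r^k(F) = k - r(E \ F), as an integer -/
noncomputable def FinMatroid.krank (M : FinMatroid α) (k : ℕ) (F : Finset α) : ℤ :=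
  (k : ℤ) - (M.r Fᶜ : ℤ)

/-- F is k-separable -/
noncomputable def FinMatroid.kSeparable (M : FinMatroid α) (k : ℕ) (F : Finset α) : Prop :=
  ∃ F₁ F₂ : Finset α, F₁ ≠ ∅ ∧ F₂ ≠ ∅ ∧ Disjoint F₁ F₂ ∧ F₁ ∪ F₂ = F ∧
    M.krank k F₁ + M.krank k F₂ = M.krank k F

noncomputable def FinMatroid.kInseparable (M : FinMatroid α) (k : ℕ) (F : Finset α) : Prop :=
  ¬ M.kSeparable k F

/-- convex hull of incidence vectors of independent sets of cardinality exactly k -/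
noncomputable def exactPolytope (M : FinMatroid α) (k : ℕ) : Set (α → ℝ) :=
  convexHull ℝ {x | ∃ I : Finset α, M.Indep I ∧ I.card = k ∧ x = incVec I}

/-- the cardinality constrained matroid polytope P^c(E) -/
noncomputable def cardPolytope (M : FinMatroid α) {m : ℕ} (c : Fin m → ℕ) : Set (α → ℝ) :=
  convexHull ℝ {x | ∃ I : Finset α, M.Indep I ∧ (∃ p : Fin m, I.card = c p) ∧ x = incVec I}

/-- dimension of (the affine hull of) a subset of ℝ^E -/
noncomputable def polyDim (s : Set (α → ℝ)) : ℕ :=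
  Module.finrank ℝ (affineSpan ℝ s).direction

/-- `a · x ≤ a₀` defines a facet of `P` -/
noncomputable def IsFacet (P : Set (α → ℝ)) (a : α → ℝ) (a₀ : ℝ) : Prop :=
  (∀ x ∈ P, ∑ e, a e * x e ≤ a₀) ∧
  polyDim {x ∈ P | ∑ e, a e * x e = a₀} + 1 = polyDim P

/-! All incidence vectors of independent `k`-sets lie in the hyperplane `x(E) = k`, so the
polytope has dimension `|E| - 1` exactly when every weight `a` with constant sum over the
independent `k`-sets is constant: these are the linear functionals vanishing on the direction
of the affine hull.

For `0 < k < r(E)`, two elements of an independent `(k+1)`-set can be traded between two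
independent `k`-sets, so `a` is constant on a basis and, by basis exchange, everywhere. For
`k = r(E)` the independent `k`-sets are the bases: a level set `F` of a non-constant `a` gives
`r(F) + r(E \ F) ≤ r(E)`, a separation, and conversely the indicator of one side of a separation
has the same sum on all bases. -/

def SumConstOn {β : Type*} (𝓘 : Set (Finset β)) (a : β → ℝ) : Prop :=
  ∀ I ∈ 𝓘, ∀ J ∈ 𝓘, ∑ e ∈ I, a e = ∑ e ∈ J, a e

def FinMatroid.indepOfCard (M : FinMatroid α) (k : ℕ) : Set (Finset α) :=
  {I | M.Indep I ∧ I.card = k}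

lemma sum_incVec {β : Type*} [DecidableEq β] (F I : Finset β) :
    ∑ e ∈ I, incVec F e = (I ∩ F).card := by
  simp [incVec]

lemma card_insert_erase_of_notMem {β : Type*} [DecidableEq β] {B : Finset β} {g y : β}
    (hgB : g ∉ B) (hyB : y ∈ B) : (insert g (B.erase y)).card = B.card := by
  rw [card_insert_of_notMem (fun h => hgB (mem_of_mem_erase h)), card_erase_add_one hyB]

namespace FinMatroid

variable (M : FinMatroid α)

lemma card_le_r {I F : Finset α} (hIF : I ⊆ F) (hI : M.Indep I) : I.card ≤ M.r F := by
  classical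
  exact le_sup (by simp [hIF, hI])

lemma exists_indep_subset_card_eq_r (F : Finset α) : ∃ I ⊆ F, M.Indep I ∧ I.card = M.r F := by
  classical
  obtain ⟨I, hI, hc⟩ := exists_mem_eq_sup (F.powerset.filter M.Indep)
    ⟨∅, by simp [M.empty_indep]⟩ card
  simp only [mem_filter, mem_powerset] at hI
  exact ⟨I, hI.1, hI.2, hc.symm⟩

lemma exists_indep_augment {I J : Finset α} (hI : M.Indep I) (hJ : M.Indep J)
    (h : I.card ≤ J.card) : ∃ K, M.Indep K ∧ I ⊆ K ∧ K ⊆ I ∪ J ∧ K.card = J.card := by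
  induction hd : J.card - I.card generalizing I with
  | zero => exact ⟨I, hI, subset_rfl, subset_union_left, by omega⟩
  | succ n ih =>
    obtain ⟨e, he, hIe⟩ := M.exchange hI hJ (by omega)
    rw [mem_sdiff] at he
    have hcard := card_insert_of_notMem he.2
    obtain ⟨K, hK, hIK, hKIJ, hKc⟩ := ih hIe (by omega) (by omega)
    refine ⟨K, hK, (subset_insert e I).trans hIK, hKIJ.trans ?_, hKc⟩
    rw [insert_union, insert_eq_of_mem (mem_union_right _ he.1)]

lemma exists_indep_insert_erase {I B : Finset α} {g : α} (hB : M.Indep B) (hIB : I ⊆ B)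
    (hlt : I.card < B.card) (hgB : g ∉ B) (hgI : M.Indep (insert g I)) :
    ∃ y ∈ B \ I, M.Indep (insert g (B.erase y)) := by
  obtain ⟨K, hK, hgIK, hKsub, hKc⟩ := M.exists_indep_augment hgI hB
    (by rw [card_insert_of_notMem (fun h => hgB (hIB h))]; omega)
  obtain ⟨y, hyB, hyK⟩ : ∃ y ∈ B, y ∉ K := by
    by_contra! hBK
    have := card_le_card (insert_subset (hgIK (mem_insert_self g I)) hBK)
    rw [card_insert_of_notMem hgB] at this
    omega
  refine ⟨y, mem_sdiff.2 ⟨hyB, fun hyI => hyK (hgIK (mem_insert_of_mem hyI))⟩, ?_⟩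
  have hKgB : K ⊆ (insert g B).erase y :=
    subset_erase.2 ⟨hKsub.trans (by rw [insert_union, union_eq_right.2 hIB]), hyK⟩
  rw [erase_insert_of_ne (fun h : g = y => hgB (h ▸ hyB))] at hKgB
  rwa [← eq_of_subset_of_card_le hKgB (by rw [card_insert_erase_of_notMem hgB hyB]; omega)]

/-- Two elements of an independent set with more than `k` elements lie in `k`-subsets
differing only in them. -/
lemma eq_of_sumConstOn_of_mem_indep {k : ℕ} (hk : 0 < k) {a : α → ℝ}
    (ha : SumConstOn (M.indepOfCard k) a) {K : Finset α} (hK : M.Indep K) (hkK : k < K.card)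
    {x y : α} (hx : x ∈ K) (hy : y ∈ K) : a x = a y := by
  obtain rfl | hxy := eq_or_ne x y
  · rfl
  obtain ⟨T, hT, hTc⟩ := exists_subset_card_eq (s := (K.erase x).erase y) (n := k - 1)
    (by rw [card_erase_of_mem (mem_erase.2 ⟨hxy.symm, hy⟩), card_erase_of_mem hx]; omega)
  have hxT : x ∉ T := fun h => by simpa using hT h
  have hyT : y ∉ T := fun h => by simpa using hT h
  have hTK : T ⊆ K := hT.trans ((erase_subset _ _).trans (erase_subset _ _))
  have hmem : ∀ z ∈ K, z ∉ T → insert z T ∈ M.indepOfCard k := fun z hz hzT =>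
    ⟨M.subset_indep hK (insert_subset hz hTK), by rw [card_insert_of_notMem hzT]; omega⟩
  have := ha _ (hmem x hx hxT) _ (hmem y hy hyT)
  rwa [sum_insert hxT, sum_insert hyT, add_left_inj] at this

/-- Every element can be exchanged into a basis `B`, on which `a` is constant. -/
lemma eq_of_sumConstOn_of_lt_r {k : ℕ} (hk : 0 < k) (hkr : k < M.r univ) {a : α → ℝ}
    (ha : SumConstOn (M.indepOfCard k) a) (e f : α) : a e = a f := by
  obtain ⟨B, -, hB, hBc⟩ := M.exists_indep_subset_card_eq_r univ
  have hbasis : ∀ e, ∃ b ∈ B, a e = a b := by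
    intro e
    by_cases heB : e ∈ B
    · exact ⟨e, heB, rfl⟩
    obtain ⟨y, hy, hK⟩ := M.exists_indep_insert_erase hB (empty_subset B)
      (by rw [card_empty]; omega) heB (by simpa using M.loopless e)
    have hyB := (mem_sdiff.1 hy).1
    obtain ⟨b, hb⟩ : (B.erase y).Nonempty := card_pos.1 (by rw [card_erase_of_mem hyB]; omega)
    exact ⟨b, mem_of_mem_erase hb, M.eq_of_sumConstOn_of_mem_indep hk ha hK
      (by rw [card_insert_erase_of_notMem heB hyB]; omega) (mem_insert_self e _)
      (mem_insert_of_mem hb)⟩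
  obtain ⟨b, hb, hab⟩ := hbasis e
  obtain ⟨b', hb', hab'⟩ := hbasis f
  rw [hab, hab', M.eq_of_sumConstOn_of_mem_indep hk ha hB (by omega) hb hb']

lemma separable_univ_iff :
    M.Separable univ ↔ ∃ F : Finset α, F ≠ ∅ ∧ Fᶜ ≠ ∅ ∧ M.r F + M.r Fᶜ ≤ M.r univ := by
  constructor
  · rintro ⟨F₁, F₂, hF₁, hF₂, hdisj, hunion, hr⟩
    obtain rfl : F₁ᶜ = F₂ := IsCompl.compl_eq ⟨hdisj, codisjoint_iff.2 hunion⟩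
    exact ⟨F₁, hF₁, hF₂, hr⟩
  · rintro ⟨F, hF, hFc, hr⟩
    exact ⟨F, Fᶜ, hF, hFc, disjoint_compl_right, union_compl F, hr⟩

/-- Extend a maximal independent subset of `Fᶜ` to a basis `B`. If `B ∩ F` were not of rank
`r F`, exchanging an element of `F` into `B` would push out an element of the same weight,
hence one of `F`. -/
lemma r_add_r_compl_le_of_sumConstOn {a : α → ℝ} (ha : SumConstOn (M.indepOfCard (M.r univ)) a)
    (c : ℝ) : M.r (univ.filter (a · = c)) + M.r (univ.filter (a · = c))ᶜ ≤ M.r univ := by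
  set F := univ.filter (a · = c)
  obtain ⟨B₀, -, hB₀, hB₀c⟩ := M.exists_indep_subset_card_eq_r univ
  obtain ⟨I₂, hI₂F, hI₂, hI₂c⟩ := M.exists_indep_subset_card_eq_r Fᶜ
  obtain ⟨B, hB, hI₂B, -, hBc⟩ :=
    M.exists_indep_augment hI₂ hB₀ (hB₀c ▸ M.card_le_r (subset_univ _) hI₂)
  have hsplit := card_inter_add_card_sdiff B F
  have h₂ : M.r Fᶜ ≤ (B \ F).card :=
    hI₂c ▸ card_le_card fun x hx => mem_sdiff.2 ⟨hI₂B hx, mem_compl.1 (hI₂F hx)⟩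
  have h₁ : M.r F ≤ (B ∩ F).card := by
    by_contra! hlt
    obtain ⟨J, hJF, hJ, hJc⟩ := M.exists_indep_subset_card_eq_r F
    have hrF := M.card_le_r (subset_univ J) hJ
    obtain ⟨g, hg, hgI⟩ :=
      M.exchange (M.subset_indep hB (inter_subset_left (s₂ := F))) hJ (by omega)
    rw [mem_sdiff] at hg
    have hgF : g ∈ F := hJF hg.1
    have hgB : g ∉ B := fun h => hg.2 (mem_inter.2 ⟨h, hgF⟩)
    obtain ⟨y, hy, hB'⟩ :=
      M.exists_indep_insert_erase hB inter_subset_left (by omega) hgB hgI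
    rw [mem_sdiff, mem_inter] at hy
    have hsum := ha B ⟨hB, by omega⟩ _
      ⟨hB', by rw [card_insert_erase_of_notMem hgB hy.1]; omega⟩
    rw [sum_insert (fun h => hgB (mem_of_mem_erase h)), sum_erase_eq_sub hy.1] at hsum
    have hyF : y ∈ F := by
      simp only [F, mem_filter, mem_univ, true_and] at hgF ⊢
      linarith
    exact hy.2 ⟨hy.1, hyF⟩
  omega

lemma sumConstOn_incVec_of_r_add_r_compl_le {F : Finset α}
    (hF : M.r F + M.r Fᶜ ≤ M.r univ) : SumConstOn (M.indepOfCard (M.r univ)) (incVec F) := by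
  suffices h : ∀ I ∈ M.indepOfCard (M.r univ), ∑ e ∈ I, incVec F e = M.r F from
    fun I hI J hJ => (h I hI).trans (h J hJ).symm
  rintro I ⟨hI, hIc⟩
  have h₁ := M.card_le_r inter_subset_right (M.subset_indep hI (inter_subset_left (s₂ := F)))
  have h₂ := M.card_le_r (fun x hx => mem_compl.2 (mem_sdiff.1 hx).2)
    (M.subset_indep hI (sdiff_subset (t := F)))
  have hsplit := card_inter_add_card_sdiff I F
  rw [sum_incVec, show (I ∩ F).card = M.r F by omega]

lemma forall_eq_of_sumConstOn_iff {k : ℕ} (hk : 0 < k) (hkr : k ≤ M.r univ) :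
    (∀ a, SumConstOn (M.indepOfCard k) a → ∀ e f, a e = a f) ↔
      M.Inseparable univ ∨ k < M.r univ := by
  obtain hlt | rfl := hkr.lt_or_eq
  · exact iff_of_true (fun a ha => M.eq_of_sumConstOn_of_lt_r hk hlt ha) (Or.inr hlt)
  simp only [lt_irrefl, or_false, Inseparable, separable_univ_iff, not_exists, not_and]
  constructor
  · intro h F hF hFc hr
    obtain ⟨e, he⟩ := nonempty_iff_ne_empty.2 hF
    obtain ⟨f, hf⟩ := nonempty_iff_ne_empty.2 hFc
    simpa [incVec, he, mem_compl.1 hf] using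
      h _ (M.sumConstOn_incVec_of_r_add_r_compl_le hr) e f
  · intro h a ha e f
    by_contra hef
    exact h (univ.filter (a · = a e)) (ne_empty_of_mem (a := e) (by simp))
      (ne_empty_of_mem (a := f) (by simp [Ne.symm hef])) (M.r_add_r_compl_le_of_sumConstOn ha _)

end FinMatroid

lemma dotProduct_incVec (a : α → ℝ) (I : Finset α) : a ⬝ᵥ incVec I = ∑ e ∈ I, a e := by
  simp [dotProduct, incVec]

lemma dotProductEquiv_mem_dualAnnihilator_vectorSpan_iff {𝓘 : Set (Finset α)} {a : α → ℝ} :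
    dotProductEquiv ℝ α a ∈ (vectorSpan ℝ (incVec '' 𝓘)).dualAnnihilator ↔ SumConstOn 𝓘 a := by
  rw [Submodule.mem_dualAnnihilator, vectorSpan_def]
  change Submodule.span ℝ _ ≤ LinearMap.ker _ ↔ _
  rw [Submodule.span_le, Set.vsub_subset_iff]
  simp [SumConstOn, sub_eq_zero, dotProduct_incVec]

lemma dotProductEquiv_mem_dualAnnihilator_ker_iff [Nonempty α] {a : α → ℝ} :
    dotProductEquiv ℝ α a ∈ (LinearMap.ker (dotProductEquiv ℝ α 1)).dualAnnihilator ↔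
      ∀ e f, a e = a f := by
  rw [Submodule.mem_dualAnnihilator]
  constructor
  · intro h e f
    have := h (Pi.single e 1 - Pi.single f 1) (by simp)
    simpa [sub_eq_zero] using this
  · intro h x hx
    obtain ⟨e₀⟩ := ‹Nonempty α›
    have ha : a = a e₀ • 1 := funext fun e => by simp [h e e₀]
    rw [LinearMap.mem_ker, dotProductEquiv_apply_apply] at hx
    rw [dotProductEquiv_apply_apply, ha, smul_dotProduct, hx, smul_zero]

lemma finrank_vectorSpan_incVec_add_one_eq_card_iff [Nonempty α] {𝓘 : Set (Finset α)} {k : ℕ}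
    (h𝓘 : ∀ I ∈ 𝓘, I.card = k) :
    Module.finrank ℝ (vectorSpan ℝ (incVec '' 𝓘)) + 1 = Fintype.card α ↔
      ∀ a, SumConstOn 𝓘 a → ∀ e f, a e = a f := by
  set W := vectorSpan ℝ (incVec '' 𝓘)
  set σ := dotProductEquiv ℝ α 1
  have hWσ : W ≤ LinearMap.ker σ := by
    have hσ : σ ∈ W.dualAnnihilator := dotProductEquiv_mem_dualAnnihilator_vectorSpan_iff.2
      fun I hI J hJ => by simp [h𝓘 I hI, h𝓘 J hJ]
    exact fun w hw => (Submodule.mem_dualAnnihilator σ).1 hσ w hw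
  have hker : Module.finrank ℝ (LinearMap.ker σ) + 1 = Fintype.card α := by
    rw [Module.Dual.finrank_ker_add_one_of_ne_zero
      ((dotProductEquiv ℝ α).map_ne_zero_iff.2 one_ne_zero), Module.finrank_fintype_fun_eq_card]
  calc Module.finrank ℝ W + 1 = Fintype.card α ↔ LinearMap.ker σ ≤ W :=
        ⟨fun h => (Submodule.eq_of_le_of_finrank_eq hWσ (by omega)).ge,
          fun h => le_antisymm hWσ h ▸ hker⟩
    _ ↔ W.dualAnnihilator ≤ (LinearMap.ker σ).dualAnnihilator :=
        Subspace.dualAnnihilator_le_dualAnnihilator_iff.symm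
    _ ↔ ∀ a, SumConstOn 𝓘 a → ∀ e f, a e = a f := by
        rw [SetLike.le_def, (dotProductEquiv ℝ α).surjective.forall]
        exact forall_congr' fun a => imp_congr dotProductEquiv_mem_dualAnnihilator_vectorSpan_iff
          (dotProductEquiv_mem_dualAnnihilator_ker_iff)

lemma polyDim_exactPolytope (M : FinMatroid α) (k : ℕ) :
    polyDim (exactPolytope M k) =
      Module.finrank ℝ (vectorSpan ℝ (incVec '' M.indepOfCard k)) := by
  have hS : {x | ∃ I, M.Indep I ∧ I.card = k ∧ x = incVec I} = incVec '' M.indepOfCard k := by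
    ext x
    simp [FinMatroid.indepOfCard, eq_comm, and_assoc]
  rw [polyDim, exactPolytope, affineSpan_convexHull, direction_affineSpan, hS]

/-- dimension of P^(k)(E). -/
theorem exactPolytope_dim_iff {α : Type*} [Fintype α] [DecidableEq α]
    (M : FinMatroid α) (k : ℕ) (hk0 : 0 < k) (hkr : k ≤ M.r Finset.univ) :
    polyDim (exactPolytope M k) + 1 = Fintype.card α ↔
      (M.Inseparable Finset.univ ∨ k < M.r Finset.univ) := by
  obtain ⟨B, -, -, hB⟩ := M.exists_indep_subset_card_eq_r univ
  obtain ⟨e, -⟩ := card_pos.1 (hB ▸ hk0.trans_le hkr)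
  have : Nonempty α := ⟨e⟩
  rw [polyDim_exactPolytope, finrank_vectorSpan_incVec_add_one_eq_card_iff fun I hI => hI.2,
    M.forall_eq_of_sumConstOn_iff hk0 hkr]
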